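/- Let α' ∈ (0, 1/10) and let Q̂ : [1, ∞) → (0, ∞) be upper semicontinuous with Q(n) := sup_{1 ≤ m ≤ n} (n/m)^{α'}·Q̂(m) finite for all n ≥ 1; call n a record point if Q(n) = Q̂(n). Suppose: (i) there exist D₅ ≥ 1 and n⋆ ≥ 1 such that Q(n'') ≤ D₅·(n''/n)^{3/4}·Q(n) whenever n⋆ ≤ n ≤ n''; (ii) M ≥ 2 satisfies D₅·2^{3/4}·(M/2)^{α'} < M^{1/10}; (iii) n₀ ≥ n⋆ is a record point and Q(M·n) ≥ M^{1/10}·Q(n) for every record point n ≥ n₀. Then for every n' ≥ n₀ there exists a record point n with n'/M ≤ n ≤ n'. -/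

import Mathlib

/-!
The supremum defining `Q(n')` is attained (upper semicontinuity) at some `m ≤ n'`, which is then
a record point, and `Q(n') ≤ (n'/p)^α' Q(p)` for every `p ∈ [m, n']`. Take the record point
`p = max m n₀`. If `M p ≤ n'`, the bound `(n/k)^α' Q(k) ≤ Q(n)` built into the regularisation and
the variance increase at `p` give `Q(n') ≥ (n'/(M p))^α' M^{1/10} Q(p) > (n'/p)^α' Q(p)`, since
`α' < 1/10`; so `p ≥ n'/M`.
-/

open Filter Set Topology

/-- The regularised scale `Q(n) = sup_{1 ≤ m ≤ n} (n/m)^α · Q̂(m)`. -/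
noncomputable def Qreg (α : ℝ) (Qhat : ℝ → ℝ) (n : ℝ) : ℝ :=
  sSup ((fun m => (n / m) ^ α * Qhat m) '' Set.Icc 1 n)

theorem ContinuousWithinAt.mul_upperSemicontinuousWithinAt {X : Type*} [TopologicalSpace X]
    {c f : X → ℝ} {s : Set X} {x : X} (hc : ContinuousWithinAt c s x) (hc0 : ∀ m ∈ s, 0 ≤ c m)
    (hf : UpperSemicontinuousWithinAt f s x) :
    UpperSemicontinuousWithinAt (fun m => c m * f m) s x := by
  intro y hy
  have hcz : ∀ᶠ z in 𝓝[>] f x, c x * z < y :=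
    (((continuous_const_mul (c x)).tendsto (f x)).mono_left nhdsWithin_le_nhds).eventually_lt_const
      hy
  obtain ⟨z, hcz, hfz⟩ := (hcz.and self_mem_nhdsWithin).exists
  filter_upwards [hf z hfz, (hc.mul continuousWithinAt_const).eventually_lt_const hcz,
    self_mem_nhdsWithin] with m hfm hcm hm
  calc c m * f m ≤ c m * z := mul_le_mul_of_nonneg_left hfm.le (hc0 m hm)
    _ < y := hcm

theorem ContinuousOn.mul_upperSemicontinuousOn {X : Type*} [TopologicalSpace X]
    {c f : X → ℝ} {s : Set X} (hc : ContinuousOn c s) (hc0 : ∀ m ∈ s, 0 ≤ c m)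
    (hf : UpperSemicontinuousOn f s) : UpperSemicontinuousOn (fun m => c m * f m) s :=
  fun x hx => (hc x hx).mul_upperSemicontinuousWithinAt hc0 (hf x hx)

theorem rpow_div_mul_rpow_div {a b c : ℝ} (ha : 0 ≤ a) (hb : 0 < b) (hc : 0 ≤ c) (α : ℝ) :
    (a / b) ^ α * (b / c) ^ α = (a / c) ^ α := by
  rw [← Real.mul_rpow (by positivity) (by positivity), div_mul_div_cancel₀ hb.ne']

theorem rpow_div_mul_lt_rpow_div_mul_rpow_mul {α β M n p q : ℝ} (hαβ : α < β) (hM : 1 < M)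
    (hn : 0 < n) (hp : 0 < p) (hq : 0 < q) :
    (n / p) ^ α * q < (n / (M * p)) ^ α * (M ^ β * q) := by
  have hMp : 0 < M * p := by nlinarith
  rw [← rpow_div_mul_rpow_div hn.le hMp hp.le, mul_div_cancel_right₀ M hp.ne', mul_assoc]
  gcongr
  exact Real.rpow_lt_rpow_of_exponent_lt hM hαβ

section Qreg

variable {α : ℝ} {Qhat : ℝ → ℝ} {m n : ℝ}

theorem le_Qreg (hm : m ∈ Icc 1 n)
    (hbdd : BddAbove ((fun m => (n / m) ^ α * Qhat m) '' Icc 1 n)) :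
    (n / m) ^ α * Qhat m ≤ Qreg α Qhat n :=
  le_csSup hbdd (mem_image_of_mem _ hm)

theorem self_le_Qreg (hn : 1 ≤ n) (hbdd : BddAbove ((fun m => (n / m) ^ α * Qhat m) '' Icc 1 n)) :
    Qhat n ≤ Qreg α Qhat n := by
  simpa [div_self (by linarith : n ≠ 0)] using le_Qreg ⟨hn, le_rfl⟩ hbdd

theorem Qreg_le {c : ℝ} (hn : 1 ≤ n) (h : ∀ m ∈ Icc 1 n, (n / m) ^ α * Qhat m ≤ c) :
    Qreg α Qhat n ≤ c :=
  csSup_le ((nonempty_Icc.2 hn).image _) (forall_mem_image.2 h)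

theorem rpow_div_mul_Qreg_le (hm : 1 ≤ m) (hmn : m ≤ n)
    (hbdd : BddAbove ((fun m => (n / m) ^ α * Qhat m) '' Icc 1 n)) :
    (n / m) ^ α * Qreg α Qhat m ≤ Qreg α Qhat n := by
  have hc : 0 < (n / m) ^ α := by apply Real.rpow_pos_of_pos; apply div_pos <;> linarith
  rw [mul_comm, ← le_div_iff₀ hc]
  refine Qreg_le hm fun j hj => ?_
  rw [le_div_iff₀ hc, mul_right_comm, mul_comm ((m / j) ^ α),
    rpow_div_mul_rpow_div (by linarith) (by linarith) (by linarith [hj.1])]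
  exact le_Qreg ⟨hj.1, hj.2.trans hmn⟩ hbdd

theorem Qreg_le_rpow_div_mul_of_eq {p : ℝ} (hQ : Qreg α Qhat n = (n / m) ^ α * Qhat m)
    (hm : 1 ≤ m) (hmp : m ≤ p) (hpn : p ≤ n)
    (hbdd : BddAbove ((fun m => (p / m) ^ α * Qhat m) '' Icc 1 p)) :
    Qreg α Qhat n ≤ (n / p) ^ α * Qreg α Qhat p := by
  rw [hQ, ← rpow_div_mul_rpow_div (b := p) (by linarith) (by linarith) (by linarith), mul_assoc]
  exact mul_le_mul_of_nonneg_left (le_Qreg ⟨hm, hmp⟩ hbdd)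
    (Real.rpow_nonneg (div_nonneg (by linarith) (by linarith)) _)

theorem exists_record_point_attaining_Qreg (husc : UpperSemicontinuousOn Qhat (Ici 1))
    (hbdd : ∀ n, 1 ≤ n → BddAbove ((fun m => (n / m) ^ α * Qhat m) '' Icc 1 n)) (hn : 1 ≤ n) :
    ∃ m ∈ Icc 1 n, Qreg α Qhat n = (n / m) ^ α * Qhat m ∧ Qreg α Qhat m = Qhat m := by
  have hcont : ContinuousOn (fun m => (n / m) ^ α) (Icc 1 n) :=
    (continuousOn_const.div (continuousOn_id' _) fun m hm => by linarith [hm.1]).rpow_const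
      fun m hm => Or.inl (div_pos (by linarith) (by linarith [hm.1])).ne'
  obtain ⟨m, hm, hmax⟩ := (hcont.mul_upperSemicontinuousOn
    (fun m hm => Real.rpow_nonneg (div_pos (by linarith) (by linarith [hm.1])).le _)
    (husc.mono Icc_subset_Ici_self)).exists_isMaxOn (nonempty_Icc.2 hn) isCompact_Icc
  refine ⟨m, hm, IsGreatest.csSup_eq ⟨mem_image_of_mem _ hm, forall_mem_image.2 hmax⟩, ?_⟩
  refine le_antisymm (Qreg_le hm.1 fun j hj => ?_) (self_le_Qreg hm.1 (hbdd m hm.1))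
  have hc : 0 < (n / m) ^ α := Real.rpow_pos_of_pos (div_pos (by linarith) (by linarith [hm.1])) _
  refine le_of_mul_le_mul_left ?_ hc
  rw [← mul_assoc, rpow_div_mul_rpow_div (by linarith) (by linarith [hm.1]) (by linarith [hj.1])]
  exact hmax ⟨hj.1, hj.2.trans hm.2⟩

end Qreg

theorem statement14_general (α' : ℝ) (hα'1 : α' < 1 / 10)
    (Qhat : ℝ → ℝ)
    (hQpos : ∀ m : ℝ, 1 ≤ m → 0 < Qhat m)
    (husc : UpperSemicontinuousOn Qhat (Set.Ici (1 : ℝ)))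
    (hQbdd : ∀ n : ℝ, 1 ≤ n → BddAbove ((fun m => (n / m) ^ α' * Qhat m) '' Set.Icc 1 n))
    (nstar : ℝ) (hnstar : 1 ≤ nstar)
    (M : ℝ) (hM : 2 ≤ M)
    (n₀ : ℝ) (hn₀ : nstar ≤ n₀)
    (hn₀rec : Qreg α' Qhat n₀ = Qhat n₀)
    (hinc : ∀ n : ℝ, n₀ ≤ n → Qreg α' Qhat n = Qhat n →
      M ^ ((1 : ℝ) / 10) * Qreg α' Qhat n ≤ Qreg α' Qhat (M * n)) :
    ∀ n' : ℝ, n₀ ≤ n' →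
      ∃ n : ℝ, 1 ≤ n ∧ n' / M ≤ n ∧ n ≤ n' ∧ Qreg α' Qhat n = Qhat n := by
  intro n' hn'
  have h1n₀ : 1 ≤ n₀ := hnstar.trans hn₀
  obtain ⟨m, hm, hQn', hmrec⟩ :=
    exists_record_point_attaining_Qreg husc hQbdd (h1n₀.trans hn')
  have hprec : Qreg α' Qhat (max m n₀) = Qhat (max m n₀) := by
    rcases max_choice m n₀ with h | h <;> rwa [h]
  set p := max m n₀
  have hp1 : 1 ≤ p := h1n₀.trans (le_max_right _ _)
  have hpn' : p ≤ n' := max_le hm.2 hn'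
  refine ⟨p, hp1, ?_, hpn', hprec⟩
  by_contra! hgap
  have hMp : M * p ≤ n' := by rw [lt_div_iff₀ (by linarith)] at hgap; linarith
  have upper : Qreg α' Qhat n' ≤ (n' / p) ^ α' * Qreg α' Qhat p :=
    Qreg_le_rpow_div_mul_of_eq hQn' hm.1 (le_max_left _ _) hpn' (hQbdd p hp1)
  have lower : (n' / (M * p)) ^ α' * (M ^ ((1 : ℝ) / 10) * Qreg α' Qhat p) ≤ Qreg α' Qhat n' :=
    (mul_le_mul_of_nonneg_left (hinc p (le_max_right _ _) hprec)
      (Real.rpow_nonneg (div_nonneg (by linarith) (by positivity)) _)).trans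
      (rpow_div_mul_Qreg_le (by nlinarith) hMp (hQbdd n' (h1n₀.trans hn')))
  have gap := rpow_div_mul_lt_rpow_div_mul_rpow_mul (n := n') (p := p) hα'1
    (by linarith : (1 : ℝ) < M) (by linarith) (by linarith)
    ((hQpos p hp1).trans_le (self_le_Qreg hp1 (hQbdd p hp1)))
  linarith

theorem statement14 (α' : ℝ) (hα'0 : 0 < α') (hα'1 : α' < 1 / 10)
    (Qhat : ℝ → ℝ)
    (hQpos : ∀ m : ℝ, 1 ≤ m → 0 < Qhat m)
    (husc : UpperSemicontinuousOn Qhat (Set.Ici (1 : ℝ)))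
    (hQbdd : ∀ n : ℝ, 1 ≤ n → BddAbove ((fun m => (n / m) ^ α' * Qhat m) '' Set.Icc 1 n))
    (D₅ nstar : ℝ) (hD₅ : 1 ≤ D₅) (hnstar : 1 ≤ nstar)
    (hgrow : ∀ n n'' : ℝ, nstar ≤ n → n ≤ n'' →
      Qreg α' Qhat n'' ≤ D₅ * (n'' / n) ^ ((3 : ℝ) / 4) * Qreg α' Qhat n)
    (M : ℝ) (hM : 2 ≤ M)
    (hMgap : D₅ * (2 : ℝ) ^ ((3 : ℝ) / 4) * (M / 2) ^ α' < M ^ ((1 : ℝ) / 10))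
    (n₀ : ℝ) (hn₀ : nstar ≤ n₀)
    (hn₀rec : Qreg α' Qhat n₀ = Qhat n₀)
    (hinc : ∀ n : ℝ, n₀ ≤ n → Qreg α' Qhat n = Qhat n →
      M ^ ((1 : ℝ) / 10) * Qreg α' Qhat n ≤ Qreg α' Qhat (M * n)) :
    ∀ n' : ℝ, n₀ ≤ n' →
      ∃ n : ℝ, 1 ≤ n ∧ n' / M ≤ n ∧ n ≤ n' ∧ Qreg α' Qhat n = Qhat n :=
  statement14_general α' hα'1 Qhat hQpos husc hQbdd nstar hnstar M hM n₀ hn₀ hn₀rec hinc
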